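/- arXiv:2602.15981 — 5 statements merged into one kernel-verified Lean document; each statement's English description precedes it below -/
import Mathlib

section
/- Let Λ₁, Λ₂ ∈ [0,1], Y ≥ 1, and define A = Λ₂, D = Λ₁ + (1−Λ₁)(1−Λ₂)·Y, B·C = AD − Λ₁Λ₂ (with B, C ≥ 0). Then R := √((A−D)² + 4BC) satisfies R ≥ |A + D − 2|, with equality if and only if Y = 1 or Λ₁ = 1 or Λ₂ = 1. -/
theorem stmt1 (Λ1 Λ2 Y B C A D R : ℝ)
    (h1 : Λ1 ∈ Set.Icc (0:ℝ) 1) (h2 : Λ2 ∈ Set.Icc (0:ℝ) 1) (hY : 1 ≤ Y)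
    (hB : 0 ≤ B) (hC : 0 ≤ C)
    (hA : A = Λ2) (hD : D = Λ1 + (1 - Λ1) * (1 - Λ2) * Y)
    (hBC : B * C = A * D - Λ1 * Λ2)
    (hR : R = Real.sqrt ((A - D)^2 + 4 * (B * C))) :
    |A + D - 2| ≤ R ∧ (R = |A + D - 2| ↔ Y = 1 ∨ Λ1 = 1 ∨ Λ2 = 1) := by
  obtain ⟨h10, h11⟩ := h1
  obtain ⟨h20, h21⟩ := h2
  have key : (A - D)^2 + 4*(B*C) = (A + D - 2)^2 + 4*((1-Λ1)*((1-Λ2)*(Y-1))) := by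
    rw [hBC, hA, hD]; ring
  have hE : 0 ≤ (1-Λ1)*((1-Λ2)*(Y-1)) := mul_nonneg (by linarith) (mul_nonneg (by linarith) (by linarith))
  have hsq : 0 ≤ (A + D - 2)^2 := sq_nonneg _
  have hRs : R = Real.sqrt ((A + D - 2)^2 + 4*((1-Λ1)*((1-Λ2)*(Y-1)))) := by
    rw [hR, key]
  have habs : |A + D - 2| = Real.sqrt ((A + D - 2)^2) := (Real.sqrt_sq_eq_abs _).symm
  constructor
  · rw [habs, hRs]
    apply Real.sqrt_le_sqrt; nlinarith
  · rw [hRs, habs]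
    rw [Real.sqrt_inj (by nlinarith) hsq]
    constructor
    · intro h
      have : (1-Λ1)*((1-Λ2)*(Y-1)) = 0 := by linarith
      rcases mul_eq_zero.mp this with h' | h'
      · exact Or.inr (Or.inl (by linarith))
      · rcases mul_eq_zero.mp h' with h'' | h''
        · exact Or.inr (Or.inr (by linarith))
        · exact Or.inl (by linarith)
    · rintro (h | h | h) <;> rw [h] <;> ring
end

section
/- Let Λ₁, Λ₂ ∈ [0,1], Y ≥ 1, A = Λ₂, D = Λ₁ + (1−Λ₁)(1−Λ₂)Y, BC = AD − Λ₁Λ₂, and R = √((A−D)² + 4BC). Then a₁ := (A + D + R)/2 ≥ 1, with equality if and only if Y = 1 or Λ₁ = 1 or Λ₂ = 1. -/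
theorem stmt6 (Λ1 Λ2 Y B C A D R a1 : ℝ)
    (h1 : Λ1 ∈ Set.Icc (0:ℝ) 1) (h2 : Λ2 ∈ Set.Icc (0:ℝ) 1) (hY : 1 ≤ Y)
    (hB : 0 ≤ B) (hC : 0 ≤ C)
    (hA : A = Λ2) (hD : D = Λ1 + (1 - Λ1) * (1 - Λ2) * Y)
    (hBC : B * C = A * D - Λ1 * Λ2)
    (hR : R = Real.sqrt ((A - D)^2 + 4 * (B * C)))
    (ha1 : a1 = (A + D + R) / 2) :
    1 ≤ a1 ∧ (a1 = 1 ↔ Y = 1 ∨ Λ1 = 1 ∨ Λ2 = 1) := by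
  obtain ⟨h10, h11⟩ := h1
  obtain ⟨h20, h21⟩ := h2
  set E := (1 - Λ1) * (1 - Λ2) * (Y - 1) with hEdef
  have hE : 0 ≤ E := by
    apply mul_nonneg (mul_nonneg (by linarith) (by linarith)) (by linarith)
  have harg : (A - D)^2 + 4 * (B * C) = (2 - (A + D))^2 + 4 * E := by
    rw [hBC]; subst hA hD; ring
  have hRnn : 0 ≤ R := hR ▸ Real.sqrt_nonneg _
  have hRge : 2 - (A + D) ≤ R := by
    calc 2 - (A + D) ≤ |2 - (A + D)| := le_abs_self _
    _ = Real.sqrt ((2 - (A + D))^2) := (Real.sqrt_sq_eq_abs _).symm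
    _ ≤ Real.sqrt ((2 - (A + D))^2 + 4 * E) := Real.sqrt_le_sqrt (by linarith)
    _ = R := by rw [hR, harg]
  have hSge : 1 + Λ1 * Λ2 + E ≤ A + D := by
    subst hA hD; simp only [hEdef]; nlinarith
  constructor
  · linarith
  constructor
  · intro h
    have hReq : R = 2 - (A + D) := by linarith
    have hargnn : 0 ≤ (A - D)^2 + 4 * (B * C) := by
      rw [harg]; positivity
    have hR2 : R^2 = (2 - (A + D))^2 + 4 * E := by
      rw [hR, Real.sq_sqrt hargnn, harg]
    rw [hReq] at hR2
    have hE0 : E = 0 := by nlinarith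
    rcases mul_eq_zero.mp hE0 with h' | h'
    · rcases mul_eq_zero.mp h' with h'' | h''
      · exact Or.inr (Or.inl (by linarith))
      · exact Or.inr (Or.inr (by linarith))
    · exact Or.inl (by linarith)
  · intro h
    have hE0 : E = 0 := by
      rcases h with h | h | h <;> simp [hEdef, h] <;> ring_nf <;> simp [h]
    have hSle : A + D ≤ 2 := by
      have : 1 + Λ1 * Λ2 + E ≤ A + D := hSge
      have hSeq : A + D = 1 + Λ1 * Λ2 + E := by
        subst hA hD; simp only [hEdef]; ring
      rw [hSeq, hE0]; nlinarith
    have hReq : R = 2 - (A + D) := by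
      rw [hR, harg, hE0, mul_zero, add_zero, Real.sqrt_sq (by linarith)]
    rw [ha1, hReq]; ring
end

section
/- Let Λ₁, Λ₂ ∈ [0,1], Y ≥ 1, A = Λ₂, D = Λ₁ + (1−Λ₁)(1−Λ₂)Y, BC = AD − Λ₁Λ₂, and R = √((A−D)² + 4BC). Then a₂ := (A + D − R)/2 ≤ 1, with equality if and only if Λ₁ = Λ₂ = 1. -/
theorem stmt7 (Λ1 Λ2 Y B C A D R a2 : ℝ)
    (h1 : Λ1 ∈ Set.Icc (0:ℝ) 1) (h2 : Λ2 ∈ Set.Icc (0:ℝ) 1) (hY : 1 ≤ Y)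
    (hB : 0 ≤ B) (hC : 0 ≤ C)
    (hA : A = Λ2) (hD : D = Λ1 + (1 - Λ1) * (1 - Λ2) * Y)
    (hBC : B * C = A * D - Λ1 * Λ2)
    (hR : R = Real.sqrt ((A - D)^2 + 4 * (B * C)))
    (ha2 : a2 = (A + D - R) / 2) :
    a2 ≤ 1 ∧ (a2 = 1 ↔ Λ1 = 1 ∧ Λ2 = 1) := by
  obtain ⟨h10, h11⟩ := h1
  obtain ⟨h20, h21⟩ := h2
  have hbc : 0 ≤ B * C := mul_nonneg hB hC
  have hnn : 0 ≤ (A - D)^2 + 4 * (B * C) := by nlinarith [sq_nonneg (A - D)]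
  have hR0 : 0 ≤ R := hR ▸ Real.sqrt_nonneg _
  have hRsq : R ^ 2 = (A - D)^2 + 4 * (B * C) := by
    rw [hR, Real.sq_sqrt hnn]
  have key : (A + D - 2)^2 ≤ (A - D)^2 + 4 * (B * C) := by
    rw [hBC, hA, hD]
    nlinarith [mul_nonneg (mul_nonneg (sub_nonneg.2 h11) (sub_nonneg.2 h21))
      (sub_nonneg.2 hY)]
  have hle : a2 ≤ 1 := by
    rcases le_or_gt (A + D - 2) 0 with h | h
    · linarith [ha2 ▸ le_refl a2]
    · nlinarith [hRsq, key, hR0]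
  refine ⟨hle, ?_, ?_⟩
  · intro heq
    have hRe : R = A + D - 2 := by rw [ha2] at heq; linarith
    have h2le : 2 ≤ A + D := by linarith
    have heq2 : (A + D - 2)^2 = (A - D)^2 + 4 * (B * C) := by rw [← hRe]; exact hRsq
    rw [hBC] at heq2
    have hprod : Λ1 * Λ2 = A + D - 1 := by linear_combination ((1:ℝ)/4) * heq2
    have hll : 1 ≤ Λ1 * Λ2 := by linarith
    have e1 : Λ1 = 1 := by nlinarith [mul_nonneg h10 (sub_nonneg.2 h21)]
    have e2 : Λ2 = 1 := by nlinarith [mul_nonneg h20 (sub_nonneg.2 h11)]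
    exact ⟨e1, e2⟩
  · rintro ⟨hl1, hl2⟩
    subst hl1 hl2
    have hbc0 : B * C = 0 := by rw [hBC, hA, hD]; ring
    have hD1 : D = 1 := by rw [hD]; ring
    have hR00 : R = 0 := by
      rw [hR, hbc0, hA, hD1]; simp
    rw [ha2, hR00, hA, hD1]; norm_num
end

section
/- Let Λ₁, Λ₂ ∈ [0,1], Y ≥ 1, A = Λ₂, D = Λ₁ + (1−Λ₁)(1−Λ₂)Y, BC = AD − Λ₁Λ₂, R = √((A−D)² + 4BC), and a₂ = (A + D − R)/2. If D ≤ A, then a₂ ≥ −1. Equivalently, if a₂ < −1 then D > A. -/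
theorem stmt8 (Λ1 Λ2 Y B C A D R a2 : ℝ)
    (h1 : Λ1 ∈ Set.Icc (0:ℝ) 1) (h2 : Λ2 ∈ Set.Icc (0:ℝ) 1) (hY : 1 ≤ Y)
    (hB : 0 ≤ B) (hC : 0 ≤ C)
    (hA : A = Λ2) (hD : D = Λ1 + (1 - Λ1) * (1 - Λ2) * Y)
    (hBC : B * C = A * D - Λ1 * Λ2)
    (hR : R = Real.sqrt ((A - D)^2 + 4 * (B * C)))
    (ha2 : a2 = (A + D - R) / 2) :
    (D ≤ A → -1 ≤ a2) ∧ (a2 < -1 → A < D) := by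
  obtain ⟨hl1, hu1⟩ := h1
  obtain ⟨hl2, hu2⟩ := h2
  have hA0 : 0 ≤ A := hA ▸ hl2
  have hD0 : 0 ≤ D := by rw [hD]; nlinarith [mul_nonneg (mul_nonneg (by linarith : (0:ℝ) ≤ 1 - Λ1) (by linarith : (0:ℝ) ≤ 1 - Λ2)) (by linarith : (0:ℝ) ≤ Y)]
  have hsq : (A - D)^2 + 4 * (B * C) ≤ (A + D + 2)^2 := by
    rw [hBC]; nlinarith [mul_nonneg hl1 hl2]
  have hRle : R ≤ A + D + 2 := by
    rw [hR]
    calc Real.sqrt ((A - D)^2 + 4 * (B * C)) ≤ Real.sqrt ((A + D + 2)^2) :=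
          Real.sqrt_le_sqrt hsq
      _ = A + D + 2 := Real.sqrt_sq (by linarith)
  have : -1 ≤ a2 := by rw [ha2]; linarith
  exact ⟨fun _ => this, fun h => absurd this (by linarith)⟩
end

section
/- Let δ ∈ [0,1), s₁ > 0, and let x₁ ≤ 1/s₁ ≤ x₂ be real numbers with E₁ ≤ x₁ and E₂ ≥ x₂ (interpreted as conditional expectations E₁ = E[p | p ≤ x₁] and E₂ = E[p | p ≥ x₂]), E₁ > 0, and F₁, F₂ ∈ (0,1]. Define y₁ = ((1 − (1−δ)^{1/F₁})·s₁ + (1−δ)^{1/F₁}/E₁)^{−1} and y₂ = (1−δ)^{1/F₂}·E₂ + (1 − (1−δ)^{1/F₂})·(1/s₁). Then y₂ − y₁ ≥ 0, with y₂ = y₁ if and only if E₁ = E₂ = 1/s₁. -/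
theorem stmt17 (δ s1 x1 x2 E1 E2 F1 F2 y1 y2 : ℝ)
    (hδ : δ ∈ Set.Ico (0:ℝ) 1) (hs1 : 0 < s1)
    (hx1 : x1 ≤ 1 / s1) (hx2 : 1 / s1 ≤ x2)
    (hE1 : E1 ≤ x1) (hE2 : x2 ≤ E2) (hE1pos : 0 < E1)
    (hF1 : F1 ∈ Set.Ioc (0:ℝ) 1) (hF2 : F2 ∈ Set.Ioc (0:ℝ) 1)
    (hy1 : y1 = ((1 - (1 - δ) ^ (1 / F1)) * s1 + (1 - δ) ^ (1 / F1) / E1)⁻¹)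
    (hy2 : y2 = (1 - δ) ^ (1 / F2) * E2 + (1 - (1 - δ) ^ (1 / F2)) * (1 / s1)) :
    0 ≤ y2 - y1 ∧ (y2 = y1 ↔ E1 = 1 / s1 ∧ E2 = 1 / s1) := by
  obtain ⟨hδ0, hδ1⟩ := hδ
  obtain ⟨hF1a, _⟩ := hF1
  obtain ⟨hF2a, _⟩ := hF2
  set a := (1 - δ) ^ (1 / F1) with hadef
  set b := (1 - δ) ^ (1 / F2) with hbdef
  have ha0 : 0 < a := Real.rpow_pos_of_pos (by linarith) _
  have ha1 : a ≤ 1 := Real.rpow_le_one (by linarith) (by linarith) (by positivity)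
  have hb0 : 0 < b := Real.rpow_pos_of_pos (by linarith) _
  have hE1le : E1 ≤ 1 / s1 := hE1.trans hx1
  have hinv : s1 ≤ 1 / E1 := by
    rw [le_div_iff₀ hE1pos]
    have h := (le_div_iff₀ hs1).mp hE1le
    nlinarith
  have hAE : a / E1 = a * (1 / E1) := by ring
  have hD : s1 ≤ (1 - a) * s1 + a / E1 := by
    have h := mul_le_mul_of_nonneg_left hinv ha0.le
    rw [hAE]; nlinarith
  have hDpos : 0 < (1 - a) * s1 + a / E1 := lt_of_lt_of_le hs1 hD
  have hy1le : y1 ≤ 1 / s1 := by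
    rw [hy1, inv_eq_one_div]
    exact one_div_le_one_div_of_le hs1 hD
  have hE2' : 1 / s1 ≤ E2 := hx2.trans hE2
  have hy2ge : 1 / s1 ≤ y2 := by
    rw [hy2]
    nlinarith [mul_le_mul_of_nonneg_left hE2' hb0.le]
  refine ⟨by linarith, ?_, ?_⟩
  · intro h
    have h1 : y1 = 1 / s1 := by linarith
    have h2 : y2 = 1 / s1 := by linarith
    constructor
    · have hDeq : (1 - a) * s1 + a / E1 = s1 := by
        have := h1
        rw [hy1, inv_eq_one_div] at this
        have := congrArg (fun t => 1 / t) this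
        simpa [one_div_one_div] using this
      have hinveq : 1 / E1 = s1 := by
        have : a * (1 / E1) = a * s1 := by rw [← hAE]; linarith
        exact mul_left_cancel₀ ha0.ne' this
      rw [← hinveq, one_div_one_div]
    · have : b * E2 = b * (1 / s1) := by rw [hy2] at h2; linarith
      exact mul_left_cancel₀ hb0.ne' this
  · rintro ⟨h1, h2⟩
    rw [hy1, hy2, h1, h2]
    field_simp
    ring
end
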